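/- Let k ≥ 2 be an integer and let 𝒞 be a k-breakable class of graphs. Let G ∈ 𝒞 and let w be a weight function on G. Then for every positive integer i there exists X ⊆ V(G) with |X| < 2^{i+1}(k−1) such that N[X] is a (w, 1/2^i)-balanced separator of G. -/

import Mathlib

open scoped BigOperators
open SimpleGraph

attribute [local instance] Classical.propDecidable

namespace ArxivFormal

/-- The closed neighborhood `N[X]` of a set of vertices `X`. -/
def closedNbhd {V : Type} (G : SimpleGraph V) (X : Set V) : Set V :=
  X ∪ {v | ∃ x ∈ X, G.Adj x v}

/-- The open neighborhood of the set `X` inside the ambient vertex set `A`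
(i.e. computed in the induced subgraph `G[A]`). -/
def openNbhdIn {V : Type} (G : SimpleGraph V) (A X : Set V) : Set V :=
  {v | v ∈ A ∧ v ∉ X ∧ ∃ x ∈ X, G.Adj x v}

/-- Two (disjoint) vertex sets are anticomplete if there are no edges between them. -/
def Anticomplete {V : Type} (G : SimpleGraph V) (X Y : Set V) : Prop :=
  Disjoint X Y ∧ ∀ x ∈ X, ∀ y ∈ Y, ¬ G.Adj x y

/-- `alphaOn G S` is the stability (independence) number of `G[S]`. -/
noncomputable def alphaOn {V : Type} [Fintype V] (G : SimpleGraph V) (S : Set V) : ℕ :=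
  sSup {n | ∃ I : Finset V, ↑I ⊆ S ∧ (∀ u ∈ I, ∀ v ∈ I, ¬ G.Adj u v) ∧ I.card = n}

/-- The weight `w(S)` of a set of vertices. -/
noncomputable def setWeight {V : Type} [Fintype V] (w : V → ℝ) (S : Set V) : ℝ :=
  ∑ v ∈ Finset.univ.filter (fun v => v ∈ S), w v

/-- A weight function takes values in `[0,1]` and has total weight at most `1`. -/
def IsWeightFunction {V : Type} [Fintype V] (w : V → ℝ) : Prop :=
  (∀ v, 0 ≤ w v ∧ w v ≤ 1) ∧ ∑ v, w v ≤ 1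

/-- A normal weight function has total weight exactly `1`. -/
def IsNormalWeightFunction {V : Type} [Fintype V] (w : V → ℝ) : Prop :=
  (∀ v, 0 ≤ w v ∧ w v ≤ 1) ∧ ∑ v, w v = 1

/-- The vertex set (as a subset of the ambient vertex set) of the connected component `c`
of the induced subgraph `G[A]`. -/
def componentSet {V : Type} (G : SimpleGraph V) (A : Set V)
    (c : (G.induce A).ConnectedComponent) : Set V :=
  {v | ∃ h : v ∈ A, (G.induce A).connectedComponentMk ⟨v, h⟩ = c}

/-- `X` is a `(w,c)`-balanced separator of the induced subgraph `G[B]`: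
every component of `G[B] ∖ X` has weight at most `c`. -/
def IsSepWithin {V : Type} [Fintype V] (G : SimpleGraph V) (w : V → ℝ) (c : ℝ)
    (B X : Set V) : Prop :=
  ∀ comp : (G.induce (B \ X)).ConnectedComponent,
    setWeight w (componentSet G (B \ X) comp) ≤ c

/-- `X` is a `(w,c)`-balanced separator of `G`. -/
def IsBalancedSeparator {V : Type} [Fintype V] (G : SimpleGraph V) (w : V → ℝ)
    (c : ℝ) (X : Set V) : Prop :=
  IsSepWithin G w c Set.univ X

/-- `G` contains no induced copy of `H`. -/
def IndFree {V W : Type} (G : SimpleGraph V) (H : SimpleGraph W) : Prop :=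
  IsEmpty (H ↪g G)

/-- The graph `S_{t,t,t}`: the claw `K_{1,3}` with every edge subdivided `t-1` times,
i.e. three paths with `t` edges each, glued at a common center. -/
def subClaw (t : ℕ) : SimpleGraph (Unit ⊕ Fin 3 × Fin t) :=
  SimpleGraph.fromRel fun a b =>
    match a, b with
    | Sum.inl _, Sum.inr p => (p.2 : ℕ) = 0
    | Sum.inr p, Sum.inr q => p.1 = q.1 ∧ (p.2 : ℕ) + 1 = (q.2 : ℕ)
    | _, _ => False

/-- The complete bipartite graph `K_{t,t}`. -/
def Ktt (t : ℕ) : SimpleGraph (Fin t ⊕ Fin t) := completeBipartiteGraph (Fin t) (Fin t)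

/-- The `t`-by-`t` hexagonal grid (wall): a brick-wall graph with horizontal paths joined by
vertical edges whose positions alternate between consecutive rows. -/
def wall (t : ℕ) : SimpleGraph (Fin (t + 1) × Fin (2 * t + 2)) :=
  SimpleGraph.fromRel fun a b =>
    (a.1 = b.1 ∧ (a.2 : ℕ) + 1 = (b.2 : ℕ)) ∨
    ((a.1 : ℕ) + 1 = (b.1 : ℕ) ∧ a.2 = b.2 ∧ ((a.1 : ℕ) + (a.2 : ℕ)) % 2 = 0)

/-- The graph obtained from `W` by subdividing the edge `uv` once (the new vertex is `none`). -/
def subdivideEdge {β : Type} (W : SimpleGraph β) (u v : β) : SimpleGraph (Option β) :=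
  SimpleGraph.fromRel fun a b =>
    (∃ x y : β, a = some x ∧ b = some y ∧ W.Adj x y ∧ s(x, y) ≠ s(u, v)) ∨
    (a = none ∧ (b = some u ∨ b = some v))

/-- `IsSubdivisionOf G W` : `G` is (isomorphic to) a graph obtained from `W` by
repeatedly subdividing edges. -/
inductive IsSubdivisionOf : {α : Type} → {β : Type} → SimpleGraph α → SimpleGraph β → Prop
  | of_iso {α β : Type} {G : SimpleGraph α} {W : SimpleGraph β} :
      (G ≃g W) → IsSubdivisionOf G W
  | step {α β : Type} {G : SimpleGraph α} {W : SimpleGraph β} {u v : β} :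
      W.Adj u v → IsSubdivisionOf G (subdivideEdge W u v) → IsSubdivisionOf G W

/-- `G` contains no induced copy of the line graph of any subdivision of the `t×t` wall,
i.e. `G` is `𝓛_t`-free. -/
def LFree (t : ℕ) {V : Type} (G : SimpleGraph V) : Prop :=
  ∀ (β : Type) (H : SimpleGraph β), IsSubdivisionOf H (wall t) → IndFree G (lineGraph H)

/-- Membership in `𝓜_t`: `G` is `(𝓛_t ∪ {S_{t,t,t}, K_{t,t}})`-free. -/
def InM (t : ℕ) {V : Type} (G : SimpleGraph V) : Prop :=
  LFree t G ∧ IndFree G (subClaw t) ∧ IndFree G (Ktt t)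

/-- Membership in `𝓜_t*`: `G` is `(𝓛_t ∪ {S_{t,t,t}})`-free. -/
def InMstar (t : ℕ) {V : Type} (G : SimpleGraph V) : Prop :=
  LFree t G ∧ IndFree G (subClaw t)

/-- A tree decomposition of `G`. -/
structure TreeDecomp {V : Type} (G : SimpleGraph V) where
  ι : Type
  tree : SimpleGraph ι
  isTree : tree.IsTree
  bag : ι → Set V
  mem_bag : ∀ v : V, ∃ i, v ∈ bag i
  edge_bag : ∀ ⦃u v : V⦄, G.Adj u v → ∃ i, u ∈ bag i ∧ v ∈ bag i
  bag_connected : ∀ v : V, (tree.induce {i | v ∈ bag i}).Connected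

/-- An extended strip decomposition of `(G, Z)` with pattern `H`. -/
structure ESD {α β : Type} (G : SimpleGraph α) (Z : Set α) (H : SimpleGraph β) where
  vMap : β → Set α
  eMap : H.edgeSet → Set α
  tMap : {T : Finset β // H.IsNClique 3 T} → Set α
  evMap : H.edgeSet → β → Set α
  evMap_eq_empty : ∀ (e : H.edgeSet) (v : β), v ∉ (e : Sym2 β) → evMap e v = ∅
  evMap_subset : ∀ (e : H.edgeSet) (v : β), evMap e v ⊆ eMap e
  covers : ∀ x : α, (∃ v, x ∈ vMap v) ∨ (∃ e, x ∈ eMap e) ∨ (∃ T, x ∈ tMap T)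
  disj_vv : ∀ v v', v ≠ v' → Disjoint (vMap v) (vMap v')
  disj_ee : ∀ e e', e ≠ e' → Disjoint (eMap e) (eMap e')
  disj_tt : ∀ T T', T ≠ T' → Disjoint (tMap T) (tMap T')
  disj_ve : ∀ v e, Disjoint (vMap v) (eMap e)
  disj_vt : ∀ v T, Disjoint (vMap v) (tMap T)
  disj_et : ∀ e T, Disjoint (eMap e) (tMap T)
  adj_iff : ∀ (e f : H.edgeSet), e ≠ f → ∀ x ∈ eMap e, ∀ y ∈ eMap f,
    (G.Adj x y ↔ ∃ v : β, v ∈ (e : Sym2 β) ∧ v ∈ (f : Sym2 β) ∧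
      x ∈ evMap e v ∧ y ∈ evMap f v)
  vertex_bd : ∀ (v : β) (x y : α), x ∈ vMap v → y ∉ vMap v → G.Adj x y →
    ∃ e : H.edgeSet, v ∈ (e : Sym2 β) ∧ y ∈ evMap e v
  triangle_bd : ∀ (T : {T : Finset β // H.IsNClique 3 T}) (x y : α),
    x ∈ tMap T → y ∉ tMap T → G.Adj x y →
    ∃ u v : β, u ≠ v ∧ u ∈ T.1 ∧ v ∈ T.1 ∧
      ∃ e : H.edgeSet, (e : Sym2 β) = s(u, v) ∧ y ∈ evMap e u ∧ y ∈ evMap e v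
  leaves_equiv : Nonempty (Z ≃ {w : β // ∃! u, H.Adj w u})
  leaves_map : ∀ z ∈ Z, ∃ w : β, (∃! u, H.Adj w u) ∧
    ∀ e : H.edgeSet, w ∈ (e : Sym2 β) → evMap e w = {z}

namespace ESD

variable {α β : Type} {G : SimpleGraph α} {Z : Set α} {H : SimpleGraph β}

/-- `η` is faithful: for every edge `uv` of `H` there is an `e`-rung,
an induced path inside `η(e)` from `η(e,v)` to `η(e,u)` whose internal vertices avoid
`η(e,u) ∪ η(e,v)`. -/
def IsFaithful (η : ESD G Z H) : Prop :=
  ∀ (u v : β) (h : H.Adj u v), ∃ (k : ℕ) (hk : 0 < k) (p : Fin k → α),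
    Function.Injective p ∧
    (∀ i j : Fin k, (i : ℕ) < (j : ℕ) → (G.Adj (p i) (p j) ↔ (j : ℕ) = (i : ℕ) + 1)) ∧
    (∀ i, p i ∈ η.eMap ⟨s(u, v), H.mem_edgeSet.mpr h⟩) ∧
    p ⟨0, hk⟩ ∈ η.evMap ⟨s(u, v), H.mem_edgeSet.mpr h⟩ v ∧
    p ⟨k - 1, Nat.sub_lt hk Nat.one_pos⟩ ∈ η.evMap ⟨s(u, v), H.mem_edgeSet.mpr h⟩ u ∧
    ∀ i : Fin k, (i : ℕ) ≠ 0 → (i : ℕ) ≠ k - 1 →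
      p i ∉ η.evMap ⟨s(u, v), H.mem_edgeSet.mpr h⟩ u ∧
      p i ∉ η.evMap ⟨s(u, v), H.mem_edgeSet.mpr h⟩ v

/-- `η.IsAtomBd A Δ` : `A` is an atom of `η` with boundary `Δ`. -/
def IsAtomBd (η : ESD G Z H) (A Δ : Set α) : Prop :=
  (∃ v : β, A = η.vMap v ∧
    Δ = {x | ∃ e : H.edgeSet, v ∈ (e : Sym2 β) ∧ x ∈ η.evMap e v}) ∨
  (∃ T, A = η.tMap T ∧
    Δ = {x | ∃ u v : β, u ≠ v ∧ u ∈ T.1 ∧ v ∈ T.1 ∧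
      ∃ e : H.edgeSet, (e : Sym2 β) = s(u, v) ∧ x ∈ η.evMap e u ∧ x ∈ η.evMap e v}) ∨
  (∃ (u v : β) (h : H.Adj u v),
    A = η.eMap ⟨s(u, v), H.mem_edgeSet.mpr h⟩ \
        (η.evMap ⟨s(u, v), H.mem_edgeSet.mpr h⟩ u ∪ η.evMap ⟨s(u, v), H.mem_edgeSet.mpr h⟩ v) ∧
    Δ = η.evMap ⟨s(u, v), H.mem_edgeSet.mpr h⟩ u ∪ η.evMap ⟨s(u, v), H.mem_edgeSet.mpr h⟩ v)

/-- `A` is an atom of `η`. -/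
def IsAtom (η : ESD G Z H) (A : Set α) : Prop := ∃ Δ, η.IsAtomBd A Δ

end ESD
/-- A class of (finite) graphs. -/
def GraphClass : Type 1 := ∀ (V : Type) [Fintype V], SimpleGraph V → Prop

/-- The class `𝓒` is closed under taking induced subgraphs. -/
def GraphClass.ClosedUnderInduced (𝓒 : GraphClass) : Prop :=
  ∀ (V : Type) [Fintype V] (G : SimpleGraph V) (S : Set V) [Fintype S],
    𝓒 V G → 𝓒 S (G.induce S)

/-- `G` is `k`-breakable: for every weight function there is a `w`-balanced separator
with a core of size strictly less than `k`. -/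
def KBreakableGraph {V : Type} [Fintype V] (G : SimpleGraph V) (k : ℕ) : Prop :=
  ∀ w : V → ℝ, IsWeightFunction w → ∃ (Y : Set V) (X : Finset V),
    X.card < k ∧ Y ⊆ closedNbhd G ↑X ∧ IsBalancedSeparator G w (1 / 2) Y

/-- A `k`-breakable class of graphs. -/
def GraphClass.KBreakable (𝓒 : GraphClass) (k : ℕ) : Prop :=
  𝓒.ClosedUnderInduced ∧
  ∀ (V : Type) [Fintype V] (G : SimpleGraph V), 𝓒 V G → KBreakableGraph G k

/-- `(S, C)` is a `(w, ε)`-boosted separator of `G`: for a maximum-weight component `B`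
of `G ∖ C`, either `w(B) ≤ 1/2` or `S ∩ B` is a `(w, ε)`-balanced separator of `G[B]`. -/
def IsBoostedSeparator {V : Type} [Fintype V] (G : SimpleGraph V) (w : V → ℝ) (ε : ℝ)
    (S C : Set V) : Prop :=
  ∀ b : (G.induce Cᶜ).ConnectedComponent,
    (∀ b', setWeight w (componentSet G Cᶜ b') ≤ setWeight w (componentSet G Cᶜ b)) →
    (setWeight w (componentSet G Cᶜ b) ≤ 1 / 2 ∨
      IsSepWithin G w ε (componentSet G Cᶜ b) (S ∩ componentSet G Cᶜ b))

/-- `G` is `(k, f, ε)`-breakable. -/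
def KFEBreakableGraph {V : Type} [Fintype V] (G : SimpleGraph V) (k : ℕ) (f : ℕ → ℝ)
    (ε : ℝ) : Prop :=
  ∀ w : V → ℝ, IsWeightFunction w → ∃ (S C : Set V) (X : Finset V),
    X.card ≤ k ∧ S ⊆ closedNbhd G ↑X ∧ IsBoostedSeparator G w ε S C ∧
    (alphaOn G C : ℝ) ≤ f (Fintype.card V)

/-- A `(k, f, ε)`-breakable class of graphs. -/
def GraphClass.KFEBreakable (𝓒 : GraphClass) (k : ℕ) (f : ℕ → ℝ) (ε : ℝ) : Prop :=
  𝓒.ClosedUnderInduced ∧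
  ∀ (V : Type) [Fintype V] (G : SimpleGraph V), 𝓒 V G → KFEBreakableGraph G k f ε

section Problematic

variable {V : Type} [Fintype V]

/-- For a vertex `x` and a component `b` of `G[A] ∖ N[X]`, the quantity
`α(N(x) ∩ N(B))`, all computed in the graph `G[A]`. -/
noncomputable def probAlpha (G : SimpleGraph V) (A : Set V) (X : Finset V) (x : V)
    (b : (G.induce (A \ closedNbhd G ↑X)).ConnectedComponent) : ℕ :=
  alphaOn G (G.neighborSet x ∩
    openNbhdIn G A (componentSet G (A \ closedNbhd G ↑X) b))

/-- `β(G[A], X)`: the largest `β` for which an `(X, β)`-problematic pair exists in `G[A]`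
(and `0` if there is none). -/
noncomputable def maxBetaIn (G : SimpleGraph V) (w : V → ℝ) (ε : ℝ) (A : Set V)
    (X : Finset V) : ℕ :=
  Finset.sup Finset.univ
    (fun p : V × (G.induce (A \ closedNbhd G ↑X)).ConnectedComponent =>
      if p.1 ∈ X ∧ ε < setWeight w (componentSet G (A \ closedNbhd G ↑X) p.2)
      then probAlpha G A X p.1 p.2 else 0)

/-- `W(G[A], X, β)`: the total weight of big components appearing in `(X, 3β/4)`-problematic
pairs of `G[A]`. -/
noncomputable def probWeightIn (G : SimpleGraph V) (w : V → ℝ) (ε : ℝ) (A : Set V)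
    (X : Finset V) (β : ℝ) : ℝ :=
  ∑ x ∈ X, ∑ b : (G.induce (A \ closedNbhd G ↑X)).ConnectedComponent,
    if ε < setWeight w (componentSet G (A \ closedNbhd G ↑X) b) ∧
       3 * β / 4 ≤ (probAlpha G A X x b : ℝ)
    then setWeight w (componentSet G (A \ closedNbhd G ↑X) b) else 0

end Problematic

/-- The `2`-subdivision of a graph: every edge is replaced by a three-edge path. The two
internal vertices of the path replacing an edge are the two darts of that edge. -/
def twoSubdivision {V : Type} (H : SimpleGraph V) : SimpleGraph (V ⊕ H.Dart) :=
  SimpleGraph.fromRel fun a b =>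
    match a, b with
    | Sum.inl u, Sum.inr d => d.toProd.1 = u
    | Sum.inr d, Sum.inr d' => d' = d.symm
    | _, _ => False

/-- `K_γ^{(2)}`, the `2`-subdivision of the complete graph on `γ` vertices. -/
def Kgamma2 (γ : ℕ) : SimpleGraph (Fin γ ⊕ (⊤ : SimpleGraph (Fin γ)).Dart) :=
  twoSubdivision (⊤ : SimpleGraph (Fin γ))

/-- `(A, B)` forms a `K_{s,t}` in `G` with respect to `Y`. -/
def IsKstWrt {V : Type} (G : SimpleGraph V) (s t : ℕ) (Y : Set V)
    (A B : Finset V) : Prop :=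
  A.card = s ∧ B.card = t ∧ Disjoint A B ∧ ↑B ⊆ Y ∧
  (∀ u ∈ A, ∀ v ∈ A, ¬ G.Adj u v) ∧ (∀ u ∈ B, ∀ v ∈ B, ¬ G.Adj u v) ∧
  (∀ u ∈ A, ∀ v ∈ B, G.Adj u v)

/-- `G` is `K_{s,t}`-free with respect to `Y`. -/
def KstFreeWrt {V : Type} (G : SimpleGraph V) (s t : ℕ) (Y : Set V) : Prop :=
  ¬ ∃ A B : Finset V, IsKstWrt G s t Y A B

/-- `p` enumerates the vertices of an induced path in `G`. -/
def IsPathSeq {V : Type} (G : SimpleGraph V) (k : ℕ) (p : Fin k → V) : Prop :=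
  Function.Injective p ∧
  ∀ i j : Fin k, (i : ℕ) < (j : ℕ) → (G.Adj (p i) (p j) ↔ (j : ℕ) = (i : ℕ) + 1)

/-- `G` is a path. -/
def IsPathGraph {V : Type} (G : SimpleGraph V) : Prop :=
  ∃ n : ℕ, Nonempty (G ≃g SimpleGraph.pathGraph n)

/-- `G` is a caterpillar: a tree with maximum degree at most three in which some path
contains all vertices of degree three. -/
def IsCaterpillar {V : Type} (G : SimpleGraph V) : Prop :=
  G.IsTree ∧ (∀ v, (G.neighborSet v).ncard ≤ 3) ∧
  ∃ (k : ℕ) (p : Fin k → V), IsPathSeq G k p ∧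
    ∀ v : V, (G.neighborSet v).ncard = 3 → ∃ i, p i = v

/-- `G` is a subdivided star. -/
def IsSubdividedStar {V : Type} (G : SimpleGraph V) : Prop :=
  ∃ m : ℕ, IsSubdivisionOf G (completeBipartiteGraph Unit (Fin m))

/-- `G` is the line graph of a caterpillar. -/
def IsLineGraphOfCaterpillar {V : Type} (G : SimpleGraph V) : Prop :=
  ∃ (β : Type) (T : SimpleGraph β), Finite β ∧ IsCaterpillar T ∧ Nonempty (G ≃g lineGraph T)

/-- `G` is the line graph of a subdivided star. -/
def IsLineGraphOfSubdividedStar {V : Type} (G : SimpleGraph V) : Prop :=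
  ∃ (β : Type) (T : SimpleGraph β), Finite β ∧ IsSubdividedStar T ∧
    Nonempty (G ≃g lineGraph T)

/-- The set `𝒵(G)` of vertices whose neighborhood is a clique. -/
def cliqueVerts {V : Type} (G : SimpleGraph V) : Set V :=
  {v | (G.neighborSet v).Pairwise G.Adj}

/-- Membership in `𝒮`: a forest every component of which has at most three leaves. -/
def InS {V : Type} (T : SimpleGraph V) : Prop :=
  T.IsAcyclic ∧ ∀ c : T.ConnectedComponent,
    {v | T.connectedComponentMk v = c ∧ (T.neighborSet v).ncard = 1}.ncard ≤ 3

/-- The vertex set of a connected component of `G`. -/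
def ccSet {V : Type} (G : SimpleGraph V) (c : G.ConnectedComponent) : Set V :=
  {v | G.connectedComponentMk v = c}

/-!
Induction on `i`, starting from `X = ∅` at `i = 0`. If `N[X₀]` is a `(w, 1/2^i)`-balanced
separator, at most `2^(i+1)` components `D` of `G ∖ N[X₀]` weigh more than `1/2^(i+1)`.
Breaking each such `G[D]` for the normalised weight `w / w(D)` costs fewer than `k` further
core vertices and leaves pieces of weight at most `w(D)/2 ≤ 1/2^(i+1)`; every component of
`G ∖ N[X]` for the enlarged core `X` lies inside one of these pieces or in a light component.
-/

open Finset

section Components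

variable {V : Type} {G : SimpleGraph V}

lemma closedNbhd_mono {X Y : Set V} (h : X ⊆ Y) : closedNbhd G X ⊆ closedNbhd G Y := by
  rintro v (hv | ⟨x, hx, hxv⟩)
  · exact Or.inl (h hv)
  · exact Or.inr ⟨x, h hx, hxv⟩

lemma image_val_closedNbhd_induce_subset {D : Set V} (X : Set D) :
    Subtype.val '' closedNbhd (G.induce D) X ⊆ closedNbhd G (Subtype.val '' X) := by
  rintro _ ⟨v, hv | ⟨x, hx, hxv⟩, rfl⟩
  · exact Or.inl ⟨v, hv, rfl⟩
  · exact Or.inr ⟨x, ⟨x, hx, rfl⟩, hxv⟩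

lemma componentSet_subset_componentSet {A B : Set V} (hAB : A ⊆ B) {x : V} (hx : x ∈ A) :
    componentSet G A ((G.induce A).connectedComponentMk ⟨x, hx⟩) ⊆
      componentSet G B ((G.induce B).connectedComponentMk ⟨x, hAB hx⟩) := by
  rintro y ⟨hy, hc⟩
  exact ⟨hAB hy, ConnectedComponent.eq.mpr
    ((ConnectedComponent.eq.mp hc).map (G.induceHomOfLE hAB).toHom)⟩

/-- The walks of `G[A]` joining vertices of the component stay inside it, hence inside `B`. -/
lemma componentSet_subset_componentSet_of_subset {A B : Set V} {x : V} (hxA : x ∈ A)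
    (hxB : x ∈ B) (h : componentSet G A ((G.induce A).connectedComponentMk ⟨x, hxA⟩) ⊆ B) :
    componentSet G A ((G.induce A).connectedComponentMk ⟨x, hxA⟩) ⊆
      componentSet G B ((G.induce B).connectedComponentMk ⟨x, hxB⟩) := by
  rintro y ⟨hy, hc⟩
  obtain ⟨p⟩ := ConnectedComponent.eq.mp hc
  have hp : ∀ z ∈ (p.map (Embedding.induce A).toHom).support, z ∈ B := by
    intro z hz
    rw [Walk.support_map, List.mem_map] at hz
    obtain ⟨z, hz, rfl⟩ := hz
    exact h ⟨z.2, ConnectedComponent.eq.mpr ⟨p.dropUntil z hz⟩⟩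
  exact ⟨h ⟨hy, hc⟩, ConnectedComponent.eq.mpr ⟨(p.map _).induce B hp⟩⟩

end Components

section Weights

variable {V : Type} [Fintype V] {G : SimpleGraph V} {w : V → ℝ}

lemma setWeight_mono (hw : ∀ v, 0 ≤ w v) {S T : Set V} (h : S ⊆ T) :
    setWeight w S ≤ setWeight w T :=
  sum_le_sum_of_subset_of_nonneg (fun v hv => by simpa using h (by simpa using hv))
    fun v _ _ => hw v

lemma setWeight_eq_sum_subtype (w : V → ℝ) (D : Set V) : setWeight w D = ∑ v : D, w v :=
  sum_subtype _ (by simp) w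

lemma setWeight_image_val (w : V → ℝ) {D : Set V} (B : Set D) :
    setWeight w (Subtype.val '' B) = setWeight (fun v : D => w v) B := by
  have himage : univ.filter (· ∈ Subtype.val '' B) = (univ.filter (· ∈ B)).map (.subtype _) := by
    ext z; simp
  rw [setWeight, himage, sum_map]
  rfl

lemma setWeight_div (w : V → ℝ) (s : ℝ) (S : Set V) :
    setWeight (fun v => w v / s) S = setWeight w S / s :=
  (sum_div _ _ _).symm

lemma sum_setWeight_componentSet_le (hw : ∀ v, 0 ≤ w v) (A : Set V)
    (s : Finset (G.induce A).ConnectedComponent) :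
    ∑ d ∈ s, setWeight w (componentSet G A d) ≤ ∑ v, w v := by
  have hdisj : (s : Set _).PairwiseDisjoint fun d => univ.filter (· ∈ componentSet G A d) := by
    intro c _ d _ hcd
    refine Finset.disjoint_left.mpr fun v hc hd => hcd ?_
    obtain ⟨_, rfl⟩ := (mem_filter.mp hc).2
    exact (mem_filter.mp hd).2.2
  simp only [setWeight]
  rw [← sum_biUnion hdisj]
  exact sum_le_sum_of_subset_of_nonneg (subset_univ _) fun v _ _ => hw v

lemma card_mul_le_of_lt_setWeight_componentSet (hw : IsWeightFunction w) {A : Set V} {ε : ℝ}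
    {s : Finset (G.induce A).ConnectedComponent}
    (hs : ∀ d ∈ s, ε < setWeight w (componentSet G A d)) : (#s : ℝ) * ε ≤ 1 :=
  calc (#s : ℝ) * ε ≤ ∑ d ∈ s, setWeight w (componentSet G A d) := by
        rw [← nsmul_eq_mul]
        exact card_nsmul_le_sum _ _ _ fun d hd => (hs d hd).le
    _ ≤ ∑ v, w v := sum_setWeight_componentSet_le (fun v => (hw.1 v).1) A s
    _ ≤ 1 := hw.2

lemma isWeightFunction_div_setWeight (hw : ∀ v, 0 ≤ w v) {D : Set V}
    (hD : 0 < setWeight w D) : IsWeightFunction fun v : D => w v / setWeight w D := by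
  refine ⟨fun v => ⟨div_nonneg (hw v) hD.le, (div_le_one hD).mpr ?_⟩, ?_⟩
  · exact single_le_sum (fun u _ => hw u) (by simp [v.2])
  · rw [← sum_div, ← setWeight_eq_sum_subtype, div_self hD.ne']

end Weights

section Separators

variable {V : Type} [Fintype V] {G : SimpleGraph V} {w : V → ℝ}

lemma IsSepWithin.mono (hw : ∀ v, 0 ≤ w v) {c c' : ℝ} {B X X' : Set V}
    (h : IsSepWithin G w c B X) (hc : c ≤ c') (hX : X ⊆ X') : IsSepWithin G w c' B X' := by
  intro comp
  induction comp using ConnectedComponent.ind with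
  | h x =>
    have hsub : B \ X' ⊆ B \ X := Set.sdiff_subset_sdiff_right hX
    exact (setWeight_mono hw (componentSet_subset_componentSet hsub x.2)).trans (h _ |>.trans hc)

lemma isSepWithin_of_setWeight_le (hw : ∀ v, 0 ≤ w v) {c : ℝ} {B : Set V} (hB : setWeight w B ≤ c)
    (X : Set V) : IsSepWithin G w c B X :=
  fun _ => (setWeight_mono hw fun _ hv => hv.1.1).trans hB

lemma IsSepWithin.of_div {s c : ℝ} (hs : 0 < s) {B X : Set V}
    (h : IsSepWithin G (fun v => w v / s) c B X) : IsSepWithin G w (c * s) B X := by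
  intro comp
  have := h comp
  rwa [setWeight_div, div_le_iff₀ hs] at this

/-- `G[D ∖ Y]` and `G[D] ∖ Y` are the same graph up to the identification of vertices. -/
lemma IsBalancedSeparator.isSepWithin_image_val (hw : ∀ v, 0 ≤ w v) {D : Set V} {c : ℝ}
    {Y : Set D} (h : IsBalancedSeparator (G.induce D) (fun v => w v) c Y) :
    IsSepWithin G w c D (Subtype.val '' Y) := by
  let φ : G.induce (D \ Subtype.val '' Y) →g (G.induce D).induce (Set.univ \ Y) :=
    { toFun := fun v => ⟨⟨v, v.2.1⟩, trivial, fun hv => v.2.2 ⟨_, hv, rfl⟩⟩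
      map_rel' := id }
  intro comp
  induction comp using ConnectedComponent.ind with
  | h x =>
    calc _ ≤ setWeight w (Subtype.val ''
          componentSet (G.induce D) (Set.univ \ Y) (connectedComponentMk _ (φ x))) := by
          refine setWeight_mono hw ?_
          rintro y ⟨hy, hc⟩
          exact ⟨⟨y, hy.1⟩, ⟨(φ ⟨y, hy⟩).2,
            ConnectedComponent.eq.mpr ((ConnectedComponent.eq.mp hc).map φ)⟩, rfl⟩
      _ ≤ c := (setWeight_image_val w _).trans_le (h _)

lemma isBalancedSeparator_of_isSepWithin_componentSet (hw : ∀ v, 0 ≤ w v) {c : ℝ}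
    {Z Y : Set V} (hZY : Z ⊆ Y)
    (h : ∀ d, IsSepWithin G w c (componentSet G (Set.univ \ Z) d) Y) :
    IsBalancedSeparator G w c Y := by
  intro comp
  induction comp using ConnectedComponent.ind with
  | h x =>
    obtain ⟨x, hx⟩ := x
    have hZ : Set.univ \ Y ⊆ Set.univ \ Z := Set.sdiff_subset_sdiff_right hZY
    set D := componentSet G (Set.univ \ Z) ((G.induce _).connectedComponentMk ⟨x, hZ hx⟩)
    have hsub : componentSet G (Set.univ \ Y) ((G.induce _).connectedComponentMk ⟨x, hx⟩) ⊆
        D \ Y := fun y hy => ⟨componentSet_subset_componentSet hZ hx hy, hy.1.2⟩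
    have hxD : x ∈ D \ Y := ⟨⟨hZ hx, rfl⟩, hx.2⟩
    exact (setWeight_mono hw (componentSet_subset_componentSet_of_subset hx hxD hsub)).trans
      (h _ _)

lemma KBreakableGraph.exists_isSepWithin {k : ℕ} {D : Set V}
    (hD : KBreakableGraph (G.induce D) k) (hw : ∀ v, 0 ≤ w v) (hwD : 0 < setWeight w D) :
    ∃ X : Finset V, #X < k ∧ IsSepWithin G w (setWeight w D / 2) D (closedNbhd G X) := by
  obtain ⟨Y, X, hXk, hYX, hY⟩ := hD _ (isWeightFunction_div_setWeight hw hwD)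
  refine ⟨X.map (.subtype _), by rwa [card_map], ?_⟩
  have hsep := IsBalancedSeparator.isSepWithin_image_val hw (IsSepWithin.of_div hwD hY)
  refine hsep.mono hw (by linarith) ?_
  rw [coe_map]
  exact (Set.image_mono hYX).trans (image_val_closedNbhd_induce_subset _)

lemma exists_closedNbhd_isBalancedSeparator_succ {k i : ℕ}
    (hbreak : ∀ D : Set V, KBreakableGraph (G.induce D) k) (hw : IsWeightFunction w)
    {X₀ : Finset V} (hX₀ : IsBalancedSeparator G w (1 / 2 ^ i) (closedNbhd G X₀)) :
    ∃ X : Finset V, #X ≤ #X₀ + 2 ^ (i + 1) * (k - 1) ∧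
      IsBalancedSeparator G w (1 / 2 ^ (i + 1)) (closedNbhd G X) := by
  have hwnn : ∀ v, 0 ≤ w v := fun v => (hw.1 v).1
  set comp := componentSet G (Set.univ \ closedNbhd G X₀)
  set heavy := univ.filter fun d => 1 / 2 ^ (i + 1) < setWeight w (comp d)
  have hheavy : #heavy ≤ 2 ^ (i + 1) := by
    have h := card_mul_le_of_lt_setWeight_componentSet (s := heavy) hw fun d hd =>
      (mem_filter.mp hd).2
    rw [mul_one_div, div_le_one (by positivity)] at h
    exact_mod_cast h
  have hcore : ∀ d, ∃ Xd : Finset V, 1 / 2 ^ (i + 1) < setWeight w (comp d) →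
      #Xd < k ∧ IsSepWithin G w (setWeight w (comp d) / 2) (comp d) (closedNbhd G Xd) := by
    intro d
    by_cases hd : 1 / 2 ^ (i + 1) < setWeight w (comp d)
    · obtain ⟨Xd, h⟩ := (hbreak _).exists_isSepWithin hwnn (lt_trans (by positivity) hd)
      exact ⟨Xd, fun _ => h⟩
    · exact ⟨∅, fun h => absurd h hd⟩
  choose core hcore using hcore
  refine ⟨X₀ ∪ heavy.biUnion core, ?_, ?_⟩
  · calc #(X₀ ∪ heavy.biUnion core) ≤ #X₀ + ∑ d ∈ heavy, #(core d) :=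
          (card_union_le _ _).trans (Nat.add_le_add_left card_biUnion_le _)
      _ ≤ #X₀ + #heavy * (k - 1) := by
          rw [← smul_eq_mul]
          gcongr
          exact sum_le_card_nsmul _ _ _ fun d hd =>
            Nat.le_sub_one_of_lt (hcore d (mem_filter.mp hd).2).1
      _ ≤ #X₀ + 2 ^ (i + 1) * (k - 1) := by gcongr
  · refine isBalancedSeparator_of_isSepWithin_componentSet hwnn
      (closedNbhd_mono (coe_subset.mpr subset_union_left)) fun d => ?_
    by_cases hd : 1 / 2 ^ (i + 1) < setWeight w (comp d)
    · refine (hcore d hd).2.mono hwnn ?_ (closedNbhd_mono ?_)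
      · calc setWeight w (comp d) / 2 ≤ 1 / 2 ^ i / 2 := by gcongr; exact hX₀ d
          _ = 1 / 2 ^ (i + 1) := by ring
      · exact coe_subset.mpr (subset_union_right.trans' (subset_biUnion_of_mem core
          (mem_filter.mpr ⟨mem_univ _, hd⟩)))
    · exact isSepWithin_of_setWeight_le hwnn (not_lt.mp hd) _

theorem exists_closedNbhd_isBalancedSeparator {k : ℕ} (hk : 2 ≤ k)
    (hbreak : ∀ D : Set V, KBreakableGraph (G.induce D) k) (hw : IsWeightFunction w) (i : ℕ) :
    ∃ X : Finset V, #X < 2 ^ (i + 1) * (k - 1) ∧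
      IsBalancedSeparator G w (1 / 2 ^ i) (closedNbhd G X) := by
  induction i with
  | zero =>
    refine ⟨∅, by simp; omega, isSepWithin_of_setWeight_le (fun v => (hw.1 v).1) ?_ _⟩
    simpa [setWeight] using hw.2
  | succ i ih =>
    obtain ⟨X₀, hX₀, hsep₀⟩ := ih
    obtain ⟨X, hX, hsep⟩ := exists_closedNbhd_isBalancedSeparator_succ hbreak hw hsep₀
    have hdouble : 2 ^ (i + 1 + 1) * (k - 1) = 2 ^ (i + 1) * (k - 1) + 2 ^ (i + 1) * (k - 1) := by
      ring
    exact ⟨X, by omega, hsep⟩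

end Separators

/-- in a `k`-breakable class, every member has, for every positive `i`,
a `(w, 1/2^i)`-balanced separator `N[X]` with `|X| < 2^{i+1}(k-1)`. -/
theorem stmt_10 :
    ∀ k : ℕ, 2 ≤ k →
    ∀ 𝓒 : GraphClass, 𝓒.KBreakable k →
    ∀ (V : Type) [Fintype V] (G : SimpleGraph V), 𝓒 V G →
    ∀ w : V → ℝ, IsWeightFunction w →
    ∀ i : ℕ, 0 < i →
      ∃ X : Finset V, X.card < 2 ^ (i + 1) * (k - 1) ∧
        IsBalancedSeparator G w ((1 : ℝ) / 2 ^ i) (closedNbhd G ↑X) := by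
  intro k hk 𝓒 h𝓒 V _ G hG w hw i _
  exact exists_closedNbhd_isBalancedSeparator hk
    (fun D => h𝓒.2 D (G.induce D) (h𝓒.1 V G D hG)) hw i

end ArxivFormal
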